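/- arXiv:2206.02072 — 2 statements merged into one kernel-verified Lean document; each statement's English description precedes it below -/
import Mathlib

section
/- Let M be an MDP model on finite state space S, finite action space A, with initial distribution β and horizon H, and let π¹ and π² be two nonstationary policies. Then V^{π¹}_{M,1} − V^{π²}_{M,1} = E_{τ∼ρ^{π²}_M}[ Σ_{h=1}^H ( V^{π¹}_{M,h}(s_h) − Q^{π¹}_{M,h}(s_h,a_h) ) ], where (s_h, a_h) are the h-th state and action of the trajectory τ drawn from the trajectory distribution of π² in M. -/
open Finset

/-- An MDP model on state space `S` and action space `A`: a reward table
`R : S → A → ℝ` together with a transition table `T : S → A → S → ℝ`. -/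
abbrev MDPModel (S A : Type*) := (S → A → ℝ) × (S → A → S → ℝ)

/-- `f` is a probability mass function on the finite type `α`. -/
def IsPMF {α : Type*} [Fintype α] (f : α → ℝ) : Prop := (∀ a, 0 ≤ f a) ∧ ∑ a, f a = 1

variable {S A : Type*}

section Defs

variable [Fintype S] [Fintype A]

/-- Validity of an MDP model: rewards lie in `[0,1]` and each transition row is a PMF on `S`. -/
def IsValidModel (M : MDPModel S A) : Prop :=
  (∀ s a, M.1 s a ∈ Set.Icc (0 : ℝ) 1) ∧ ∀ s a, IsPMF (fun s' => M.2 s a s')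

/-- A stationary stochastic policy: every row is a PMF on actions. -/
def IsPolicy (σ : S → A → ℝ) : Prop := ∀ s, IsPMF (σ s)

/-- The Bellman operator of model `M` under stationary policy `σ`. -/
def bellman (M : MDPModel S A) (σ : S → A → ℝ) (V : S → ℝ) (s : S) : ℝ :=
  ∑ a, σ s a * (M.1 s a + ∑ s', M.2 s a s' * V s')

/-- Value function with `n` steps to go (auxiliary to `val`); a nonstationary policy is
encoded as `π : ℕ → S → A → ℝ`, with only the components `π 1, …, π H` being relevant. -/
def valAux (M : MDPModel S A) (π : ℕ → S → A → ℝ) (H : ℕ) : ℕ → S → ℝ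
  | 0 => fun _ => 0
  | n + 1 => bellman M (π (H - n)) (valAux M π H n)

/-- `V^π_{M,h}` for horizon `H`, defined by the backward recursion
`V^π_{M,H+1} = 0`, `V^π_{M,h} = B^{π_h}_M V^π_{M,h+1}` (meaningful for `1 ≤ h ≤ H+1`). -/
def val (M : MDPModel S A) (π : ℕ → S → A → ℝ) (H h : ℕ) : S → ℝ :=
  valAux M π H (H + 1 - h)

/-- `Q^π_{M,h}(s,a) = R_M(s,a) + Σ_{s'} T_M(s,a)(s') · V^π_{M,h+1}(s')`. -/
def qval (M : MDPModel S A) (π : ℕ → S → A → ℝ) (H h : ℕ) (s : S) (a : A) : ℝ :=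
  M.1 s a + ∑ s', M.2 s a s' * val M π H (h + 1) s'

/-- The β-averaged value of `π` at step 1: `V^π_{M,1} = Σ_s β(s) · V^π_{M,1}(s)`. -/
def valBar (M : MDPModel S A) (π : ℕ → S → A → ℝ) (H : ℕ) (β : S → ℝ) : ℝ :=
  ∑ s, β s * val M π H 1 s

end Defs

/-- The density of the trajectory distribution `ρ^π_M`: a trajectory
`τ = (s_1, a_1, …, s_H, a_H, s_{H+1})` is encoded as a pair
`(τ.1, τ.2) : (Fin (H+1) → S) × (Fin H → A)`, with the paper's `s_h` (resp. `a_h`)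
being `τ.1 ⟨h-1⟩` (resp. `τ.2 ⟨h-1⟩`), and has probability
`β(s_1) · ∏_{h=1}^H π_h(s_h)(a_h) · T_M(s_h,a_h)(s_{h+1})`. -/
def trajDensity [Fintype S] [Fintype A] (M : MDPModel S A) (β : S → ℝ)
    (π : ℕ → S → A → ℝ) (H : ℕ) (τ : (Fin (H + 1) → S) × (Fin H → A)) : ℝ :=
  β (τ.1 0) * ∏ h : Fin H,
    π (h.1 + 1) (τ.1 h.castSucc) (τ.2 h) * M.2 (τ.1 h.castSucc) (τ.2 h) (τ.1 h.succ)

/-!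
Writing `Δ_h = V^{π¹}_h − V^{π²}_h`, the Bellman equation of `π²` gives
`Δ_h(s) = E_{a∼π²_h(s)}[(V^{π¹}_h(s) − Q^{π¹}_h(s,a)) + E_{s'∼T(s,a)} Δ_{h+1}(s')]`.
Peeling off the first step of a `π²`-trajectory and inducting on the number of remaining steps,
the expected sum of the terms `V^{π¹}_h − Q^{π¹}_h` from step `h` on is therefore `E[Δ_h]`;
at `h = H + 1` both values vanish.
-/

lemma Fin.sum_univ_tuple_cons {α β : Type*} [Fintype α] [AddCommMonoid β] {n : ℕ}
    (F : (Fin (n + 1) → α) → β) :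
    ∑ x, F x = ∑ a, ∑ x : Fin n → α, F (Fin.cons a x) := by
  rw [← (Fin.consEquiv fun _ => α).sum_comp, Fintype.sum_prod_type]
  rfl

section Trajectory

variable [Fintype S] [Fintype A]

lemma sum_trajectory_cons {n : ℕ} (F : (Fin (n + 2) → S) × (Fin (n + 1) → A) → ℝ) :
    ∑ τ, F τ = ∑ s, ∑ a, ∑ τ : (Fin (n + 1) → S) × (Fin n → A),
      F (Fin.cons s τ.1, Fin.cons a τ.2) := by
  rw [Fintype.sum_prod_type, Fin.sum_univ_tuple_cons]
  simp only [Fin.sum_univ_tuple_cons (α := A), Fintype.sum_prod_type]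
  exact Finset.sum_congr rfl fun s _ => Finset.sum_comm

lemma trajDensity_cons (M : MDPModel S A) (β : S → ℝ) (π : ℕ → S → A → ℝ) {n : ℕ}
    (s : S) (a : A) (τ : (Fin (n + 1) → S) × (Fin n → A)) :
    trajDensity M β π (n + 1) (Fin.cons s τ.1, Fin.cons a τ.2) =
      β s * π 1 s a * trajDensity M (M.2 s a) (fun k => π (k + 1)) n τ := by
  simp only [trajDensity, Fin.prod_univ_succ, Fin.cons_zero, Fin.cons_succ,
    Fin.castSucc_zero, ← Fin.succ_castSucc, Fin.val_succ, Fin.val_zero]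
  ring

variable {M : MDPModel S A} (hT : ∀ s a, ∑ s', M.2 s a s' = 1)
include hT

lemma sum_trajDensity {n : ℕ} (β : S → ℝ) {π : ℕ → S → A → ℝ}
    (hπ : ∀ h s, ∑ a, π h s a = 1) :
    ∑ τ, trajDensity M β π n τ = ∑ s, β s := by
  induction n generalizing β π with
  | zero =>
    rw [Fintype.sum_prod_type, Fin.sum_univ_tuple_cons]
    simp [trajDensity]
  | succ n ih =>
    simp only [sum_trajectory_cons, trajDensity_cons, mul_assoc, ← Finset.mul_sum,
      ih _ fun h => hπ (h + 1), hT, mul_one, hπ]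

lemma sum_trajDensity_mul_sum_succ {n : ℕ} (β : S → ℝ) {π : ℕ → S → A → ℝ}
    (hπ : ∀ h s, ∑ a, π h s a = 1) (f : ℕ → S → A → ℝ) :
    ∑ τ, trajDensity M β π (n + 1) τ * ∑ h : Fin (n + 1), f (h + 1) (τ.1 h.castSucc) (τ.2 h) =
      ∑ s, ∑ a, β s * π 1 s a * (f 1 s a +
        ∑ τ, trajDensity M (M.2 s a) (fun k => π (k + 1)) n τ *
          ∑ h : Fin n, f (h + 1 + 1) (τ.1 h.castSucc) (τ.2 h)) := by
  rw [sum_trajectory_cons]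
  refine Finset.sum_congr rfl fun s _ => Finset.sum_congr rfl fun a _ => ?_
  simp only [trajDensity_cons, Fin.sum_univ_succ (n := n), Fin.cons_zero, Fin.castSucc_zero,
    ← Fin.succ_castSucc, Fin.cons_succ, Fin.val_zero, zero_add, Fin.val_succ, mul_add,
    Finset.sum_add_distrib, mul_assoc, ← Finset.mul_sum]
  rw [← Finset.sum_mul, sum_trajDensity hT _ fun h => hπ (h + 1), hT, one_mul]

end Trajectory

section Value

variable [Fintype S] [Fintype A] (M : MDPModel S A) {H : ℕ}

lemma val_horizon_succ (π : ℕ → S → A → ℝ) : val M π H (H + 1) = 0 := by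
  funext s
  simp [_root_.val, valAux]

lemma val_eq_bellman (π : ℕ → S → A → ℝ) {h : ℕ} (hh : h ≤ H) :
    val M π H h = bellman M (π h) (val M π H (h + 1)) := by
  obtain ⟨n, rfl⟩ := Nat.exists_eq_add_of_le hh
  rw [_root_.val, _root_.val, show h + n + 1 - h = n + 1 by omega, valAux,
    show h + n - n = h by omega, show h + n + 1 - (h + 1) = n by omega]

lemma val_sub_val_eq {π₁ π₂ : ℕ → S → A → ℝ} {h : ℕ} (hπ₂ : ∀ s, ∑ a, π₂ h s a = 1)
    (hh : h ≤ H) (s : S) :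
    val M π₁ H h s - val M π₂ H h s = ∑ a, π₂ h s a * (val M π₁ H h s - qval M π₁ H h s a +
      ∑ s', M.2 s a s' * (val M π₁ H (h + 1) s' - val M π₂ H (h + 1) s')) := by
  conv_lhs => rw [← one_mul (val M π₁ H h s), ← hπ₂ s, val_eq_bellman M π₂ hh, bellman,
    Finset.sum_mul, ← Finset.sum_sub_distrib]
  refine Finset.sum_congr rfl fun a _ => ?_
  simp only [qval, mul_sub, Finset.sum_sub_distrib]
  ring

end Value

theorem sum_trajDensity_mul_sum_val_sub_qval [Fintype S] [Fintype A] {M : MDPModel S A}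
    (hT : ∀ s a, ∑ s', M.2 s a s' = 1) {H : ℕ} (π₁ : ℕ → S → A → ℝ) {π₂ : ℕ → S → A → ℝ}
    (hπ₂ : ∀ h s, ∑ a, π₂ h s a = 1) {n k : ℕ} (hnk : n + k = H) (β : S → ℝ) :
    ∑ τ, trajDensity M β (fun j => π₂ (j + k)) n τ * ∑ h : Fin n,
        (val M π₁ H (h + 1 + k) (τ.1 h.castSucc) -
          qval M π₁ H (h + 1 + k) (τ.1 h.castSucc) (τ.2 h)) =
      ∑ s, β s * (val M π₁ H (k + 1) s - val M π₂ H (k + 1) s) := by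
  induction n generalizing k β with
  | zero =>
    subst hnk
    simp [val_horizon_succ]
  | succ n ih =>
    refine (sum_trajDensity_mul_sum_succ hT β (fun h => hπ₂ (h + k))
      fun j s a => val M π₁ H (j + k) s - qval M π₁ H (j + k) s a).trans ?_
    have hshift : ∀ j, j + 1 + k = j + (k + 1) := fun j => by omega
    simp only [hshift, ih (k := k + 1) (by omega), zero_add]
    refine Finset.sum_congr rfl fun s _ => ?_
    rw [val_sub_val_eq M (hπ₂ (k + 1)) (by omega), Finset.mul_sum]
    exact Finset.sum_congr rfl fun a _ => by ring

theorem performance_difference_general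
    [Fintype S] [Fintype A]
    (H : ℕ) (β : S → ℝ)
    (M : MDPModel S A) (hM : IsValidModel M)
    (π1 π2 : ℕ → S → A → ℝ) (hπ2 : ∀ h, IsPolicy (π2 h)) :
    valBar M π1 H β - valBar M π2 H β =
      ∑ τ : (Fin (H + 1) → S) × (Fin H → A), trajDensity M β π2 H τ *
        ∑ h : Fin H,
          (val M π1 H (h.1 + 1) (τ.1 h.castSucc) -
            qval M π1 H (h.1 + 1) (τ.1 h.castSucc) (τ.2 h)) := by
  rw [valBar, valBar, ← Finset.sum_sub_distrib]
  simp only [← mul_sub]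
  exact (sum_trajDensity_mul_sum_val_sub_qval (fun s a => (hM.2 s a).2) π1
    (fun h s => (hπ2 h s).2) H.add_zero β).symm

/-- performance-difference lemma.  For an MDP model `M` and two
nonstationary policies `π¹`, `π²`,
`V^{π¹}_{M,1} − V^{π²}_{M,1} = E_{τ∼ρ^{π²}_M}[ Σ_{h=1}^H (V^{π¹}_{M,h}(s_h) − Q^{π¹}_{M,h}(s_h,a_h)) ]`. -/
theorem performance_difference
    [Fintype S] [Fintype A] [Nonempty S] [Nonempty A]
    (H : ℕ) (hH : 1 ≤ H) (β : S → ℝ) (hβ : IsPMF β)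
    (M : MDPModel S A) (hM : IsValidModel M)
    (π1 π2 : ℕ → S → A → ℝ) (hπ1 : ∀ h, IsPolicy (π1 h)) (hπ2 : ∀ h, IsPolicy (π2 h)) :
    valBar M π1 H β - valBar M π2 H β =
      ∑ τ : (Fin (H + 1) → S) × (Fin H → A), trajDensity M β π2 H τ *
        ∑ h : Fin H,
          (val M π1 H (h.1 + 1) (τ.1 h.castSucc) -
            qval M π1 H (h.1 + 1) (τ.1 h.castSucc) (τ.2 h)) :=
  performance_difference_general H β M hM π1 π2 hπ2
end

section
/- Let Π be a set of stationary policies and 𝒱 a set of functions S → ℝ. Let M and M̂ be MDP models on the same finite S, A, β, H, and let π = (π_1,…,π_H) be a nonstationary policy such that π_h ∈ Π for every h ∈ [H] and V^π_{M,h} ∈ 𝒱 for every h ∈ {2,…,H+1}. Then |V^π_{M,1} − V^π_{M̂,1}| ≤ H·√(d_{Π,𝒱}(M,M̂)), with the convention that the right-hand side is +∞ when the distortion is infinite. -/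
/-! Under a stochastic policy and stochastic transitions the Bellman operator is nonexpansive in
the sup norm. Splitting `V_{M,h} - V_{Mh,h}` as
`(B_M - B_Mh) V_{M,h+1} + (B_Mh V_{M,h+1} - B_Mh V_{Mh,h+1})`, the first term is at most `√d`
because `π_h ∈ Π` and `V_{M,h+1} ∈ 𝒱`, and the second is at most the error at step `h + 1`; so the
errors add up to `H √d` at step 1, and averaging over `β` preserves the bound. -/

open Finset

variable {S A : Type*}

open scoped ENNReal

/-- The value-equivalence distortion
`d_{Π,𝒱}(M,Mh) = sup_{π∈Π, V∈𝒱} (max_{s∈S} |B^π_M V(s) − B^π_{Mh} V(s)|)²`,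
with values in `[0,∞]`. -/
noncomputable def distortion [Fintype S] [Fintype A] [Nonempty S]
    (Pi : Set (S → A → ℝ)) (Vcl : Set (S → ℝ)) (M Mh : MDPModel S A) : ℝ≥0∞ :=
  ⨆ σ ∈ Pi, ⨆ V ∈ Vcl,
    (ENNReal.ofReal (univ.sup' univ_nonempty fun s => |bellman M σ V s - bellman Mh σ V s|)) ^ 2

lemma IsPMF.abs_sum_mul_le {α : Type*} [Fintype α] {p : α → ℝ} (hp : IsPMF p) {f : α → ℝ}
    {c : ℝ} (hf : ∀ a, |f a| ≤ c) : |∑ a, p a * f a| ≤ c :=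
  calc |∑ a, p a * f a|
      ≤ ∑ a, |p a * f a| := abs_sum_le_sum_abs _ _
    _ = ∑ a, p a * |f a| := by simp_rw [abs_mul, abs_of_nonneg (hp.1 _)]
    _ ≤ ∑ a, p a * c := sum_le_sum fun a _ => mul_le_mul_of_nonneg_left (hf a) (hp.1 a)
    _ = c := by rw [← sum_mul, hp.2, one_mul]

section Bellman

variable [Fintype S] [Fintype A]

lemma bellman_sub_bellman (M : MDPModel S A) (σ : S → A → ℝ) (V W : S → ℝ) (s : S) :
    bellman M σ V s - bellman M σ W s =
      ∑ a, σ s a * ∑ s', M.2 s a s' * (V s' - W s') := by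
  simp only [bellman, ← sum_sub_distrib, ← mul_sub, add_sub_add_left_eq_sub]

lemma abs_bellman_sub_bellman_le {M : MDPModel S A} (hT : ∀ s a, IsPMF (M.2 s a))
    {σ : S → A → ℝ} (hσ : IsPolicy σ) {V W : S → ℝ} {c : ℝ} (hVW : ∀ s, |V s - W s| ≤ c)
    (s : S) : |bellman M σ V s - bellman M σ W s| ≤ c := by
  rw [bellman_sub_bellman]
  exact (hσ s).abs_sum_mul_le fun a => (hT s a).abs_sum_mul_le hVW

end Bellman

section Simulation

variable [Fintype S] [Fintype A] {M Mh : MDPModel S A} {π : ℕ → S → A → ℝ} {H : ℕ} {ε : ℝ}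

lemma abs_valAux_sub_valAux_le (hT : ∀ s a, IsPMF (Mh.2 s a)) (hπ : ∀ h, IsPolicy (π h))
    (hstep : ∀ h, 1 ≤ h → h ≤ H → ∀ s,
      |bellman M (π h) (val M π H (h + 1)) s - bellman Mh (π h) (val M π H (h + 1)) s| ≤ ε)
    {n : ℕ} (hn : n ≤ H) (s : S) : |valAux M π H n s - valAux Mh π H n s| ≤ n * ε := by
  induction n generalizing s with
  | zero => simp [valAux]
  | succ n ih =>
    have hval : val M π H (H - n + 1) = valAux M π H n := by
      unfold _root_.val; congr 1; omega
    have hmodel := hstep (H - n) (by omega) (by omega) s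
    rw [hval] at hmodel
    have hpolicy := abs_bellman_sub_bellman_le hT (hπ (H - n)) (ih (by omega)) s
    simp only [valAux]
    push_cast
    linarith [abs_sub_le (bellman M (π (H - n)) (valAux M π H n) s)
      (bellman Mh (π (H - n)) (valAux M π H n) s) (bellman Mh (π (H - n)) (valAux Mh π H n) s)]

lemma abs_valBar_sub_valBar_le {β : S → ℝ} (hβ : IsPMF β) (hT : ∀ s a, IsPMF (Mh.2 s a))
    (hπ : ∀ h, IsPolicy (π h))
    (hstep : ∀ h, 1 ≤ h → h ≤ H → ∀ s,
      |bellman M (π h) (val M π H (h + 1)) s - bellman Mh (π h) (val M π H (h + 1)) s| ≤ ε) :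
    |valBar M π H β - valBar Mh π H β| ≤ H * ε := by
  simp only [valBar, _root_.val, Nat.add_sub_cancel, ← sum_sub_distrib, ← mul_sub]
  exact hβ.abs_sum_mul_le (abs_valAux_sub_valAux_le hT hπ hstep le_rfl)

end Simulation

lemma ofReal_abs_bellman_sub_le_distortion_rpow [Fintype S] [Fintype A] [Nonempty S]
    {Pi : Set (S → A → ℝ)} {Vcl : Set (S → ℝ)} {M Mh : MDPModel S A} {σ : S → A → ℝ}
    (hσ : σ ∈ Pi) {V : S → ℝ} (hV : V ∈ Vcl) (s : S) :
    ENNReal.ofReal |bellman M σ V s - bellman Mh σ V s| ≤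
      distortion Pi Vcl M Mh ^ (1 / 2 : ℝ) := by
  set gap := fun s => |bellman M σ V s - bellman Mh σ V s|
  have hsq : ENNReal.ofReal (univ.sup' univ_nonempty gap) ^ 2 ≤ distortion Pi Vcl M Mh :=
    le_iSup₂_of_le (f := fun σ _ => ⨆ V ∈ Vcl, _) σ hσ (le_iSup₂_of_le V hV le_rfl)
  calc ENNReal.ofReal (gap s)
      ≤ ENNReal.ofReal (univ.sup' univ_nonempty gap) :=
        ENNReal.ofReal_le_ofReal (le_sup' gap (mem_univ s))
    _ ≤ distortion Pi Vcl M Mh ^ (1 / 2 : ℝ) := by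
        rw [one_div, ENNReal.le_rpow_inv_iff two_pos, ENNReal.rpow_two]
        exact hsq

theorem value_gap_le_sqrt_distortion_general
    [Fintype S] [Fintype A] [Nonempty S]
    (H : ℕ) (hH : 1 ≤ H) (β : S → ℝ) (hβ : IsPMF β)
    (M Mh : MDPModel S A) (hMh : IsValidModel Mh)
    (Pi : Set (S → A → ℝ)) (Vcl : Set (S → ℝ))
    (π : ℕ → S → A → ℝ) (hπ : ∀ h, IsPolicy (π h))
    (hπPi : ∀ h, 1 ≤ h → h ≤ H → π h ∈ Pi)
    (hValV : ∀ h, 2 ≤ h → h ≤ H + 1 → val M π H h ∈ Vcl) :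
    ENNReal.ofReal |valBar M π H β - valBar Mh π H β| ≤
      (H : ℝ≥0∞) * distortion Pi Vcl M Mh ^ (1 / 2 : ℝ) := by
  set D := distortion Pi Vcl M Mh ^ (1 / 2 : ℝ)
  rcases eq_or_ne D ∞ with hD | hD
  · rw [hD, ENNReal.mul_top (by exact_mod_cast (Nat.one_le_iff_ne_zero.mp hH))]
    exact le_top
  have hstep : ∀ h, 1 ≤ h → h ≤ H → ∀ s,
      |bellman M (π h) (_root_.val M π H (h + 1)) s -
        bellman Mh (π h) (_root_.val M π H (h + 1)) s| ≤ D.toReal := fun h h1 h2 s =>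
    (ENNReal.ofReal_le_iff_le_toReal hD).1 <| ofReal_abs_bellman_sub_le_distortion_rpow
      (hπPi h h1 h2) (hValV (h + 1) (by omega) (by omega)) s
  calc ENNReal.ofReal |valBar M π H β - valBar Mh π H β|
      ≤ ENNReal.ofReal (H * D.toReal) :=
        ENNReal.ofReal_le_ofReal (abs_valBar_sub_valBar_le hβ hMh.2 hπ hstep)
    _ = H * D := by
        rw [ENNReal.ofReal_mul (Nat.cast_nonneg H), ENNReal.ofReal_natCast,
          ENNReal.ofReal_toReal hD]

/-- If every component of `π` lies in `Π` and every value function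
`V^π_{M,h}`, `h ∈ {2,…,H+1}`, lies in `𝒱`, then
`|V^π_{M,1} − V^π_{Mh,1}| ≤ H · √(d_{Π,𝒱}(M,Mh))` (in `[0,∞]`). -/
theorem value_gap_le_sqrt_distortion
    [Fintype S] [Fintype A] [Nonempty S] [Nonempty A]
    (H : ℕ) (hH : 1 ≤ H) (β : S → ℝ) (hβ : IsPMF β)
    (M Mh : MDPModel S A) (hM : IsValidModel M) (hMh : IsValidModel Mh)
    (Pi : Set (S → A → ℝ)) (Vcl : Set (S → ℝ))
    (π : ℕ → S → A → ℝ) (hπ : ∀ h, IsPolicy (π h))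
    (hπPi : ∀ h, 1 ≤ h → h ≤ H → π h ∈ Pi)
    (hValV : ∀ h, 2 ≤ h → h ≤ H + 1 → val M π H h ∈ Vcl) :
    ENNReal.ofReal |valBar M π H β - valBar Mh π H β| ≤
      (H : ℝ≥0∞) * distortion Pi Vcl M Mh ^ (1 / 2 : ℝ) :=
  value_gap_le_sqrt_distortion_general H hH β hβ M Mh hMh Pi Vcl π hπ hπPi hValV
end
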